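/- arXiv:2110.14561 — 4 statements merged into one kernel-verified Lean document; each statement's English description precedes it below -/
import Mathlib

section
/- Let C be an abelian category with a slope function μ: C → S into a totally ordered set, satisfying the seesaw property and such that every object has a Harder–Narasimhan filtration with semistable factors of strictly decreasing slopes. For s ∈ S define T_s as the full subcategory of objects all of whose nonzero quotients have slope ≥ s, and F_s as the full subcategory of objects all of whose nonzero subobjects have slope < s. Then (T_s, F_s) is a torsion pair on C. -/
open CategoryTheory CategoryTheory.Limits ZeroObject

section Helpers

variable {C : Type*} [Category C] [Abelian C]

lemma stmt4_isZero_of_epi_zero {X Q : C} (p : X ⟶ Q) [Epi p] (hp : p = 0) : IsZero Q := by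
  have h : p ≫ 𝟙 Q = p ≫ 0 := by simp [hp]
  rw [cancel_epi] at h
  exact (IsZero.iff_id_eq_zero Q).2 (by simpa using h)

lemma stmt4_isZero_of_mono_zero {E X : C} (i : E ⟶ X) [Mono i] (hi : i = 0) : IsZero E := by
  have h : 𝟙 E ≫ i = 0 ≫ i := by simp [hi]
  rw [cancel_mono] at h
  exact (IsZero.iff_id_eq_zero E).2 (by simpa using h)

lemma stmt4_zero_ses (X : C) (hX : IsZero X) :
    (ShortComplex.mk (𝟙 X) (𝟙 X) (by rw [hX.eq_of_src (𝟙 X) 0]; simp)).ShortExact :=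
  { exact := ShortComplex.exact_of_isZero_X₂ _ hX
    mono_f := inferInstance
    epi_g := inferInstance }

lemma stmt4_ses_id_zero (X : C) :
    (ShortComplex.mk (𝟙 X) (0 : X ⟶ (0 : C)) (by simp)).ShortExact :=
  ShortComplex.Splitting.shortExact
    { r := 𝟙 X
      s := 0
      f_r := by simp
      s_g := (isZero_zero C).eq_of_src _ _
      id := by simp }

lemma stmt4_ses_iso_mid {A X X' B : C} {f : A ⟶ X} {g : X ⟶ B} {w : f ≫ g = 0}
    (h : (ShortComplex.mk f g w).ShortExact) (e : X ≅ X') :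
    (ShortComplex.mk (f ≫ e.hom) (e.inv ≫ g)
      (by rw [Category.assoc, Iso.hom_inv_id_assoc, w])).ShortExact := by
  refine ShortComplex.shortExact_of_iso ?_ h
  exact ShortComplex.isoMk (Iso.refl _) e (Iso.refl _) (by simp) (by simp)

lemma stmt4_isIso_f_of_isZero_X₃ {A X B : C} {f : A ⟶ X} {g : X ⟶ B} {w : f ≫ g = 0}
    (h : (ShortComplex.mk f g w).ShortExact) (hB : IsZero B) : IsIso f := by
  have := h.mono_f
  have hg : g = 0 := hB.eq_of_tgt _ _
  have : Epi f := (ShortComplex.exact_iff_epi _ hg).1 h.exact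
  exact isIso_of_mono_of_epi f

end Helpers


section Slope

variable {C : Type*} [Category C] [Abelian C] {S : Type*} [LinearOrder S] (μ : C → S)

lemma stmt4_mu_iso
    (seesaw : ∀ {A X B : C} (f : A ⟶ X) (g : X ⟶ B) (w : f ≫ g = 0),
      (ShortComplex.mk f g w).ShortExact → ¬ IsZero A → ¬ IsZero B →
      ((μ A < μ X ∧ μ X < μ B) ∨ (μ A = μ X ∧ μ X = μ B) ∨ (μ B < μ X ∧ μ X < μ A)))
    {X Y : C} (hX : ¬ IsZero X) (e : X ≅ Y) : μ X = μ Y := by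
  have hY : ¬ IsZero Y := fun h => hX (h.of_iso e)
  have w1 : (biprod.inl : X ⟶ X ⊞ X) ≫ biprod.snd = 0 := biprod.inl_snd
  have ses1 : (ShortComplex.mk (biprod.inl : X ⟶ X ⊞ X) (biprod.snd) w1).ShortExact :=
    ShortComplex.Splitting.shortExact
      { r := biprod.fst, s := biprod.inr, f_r := by simp, s_g := by simp, id := biprod.total }
  have hM : μ (X ⊞ X) = μ X := by
    rcases seesaw _ _ w1 ses1 hX hX with ⟨h1, h2⟩ | ⟨h1, h2⟩ | ⟨h1, h2⟩
    · exact absurd (h1.trans h2) (lt_irrefl _)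
    · exact h1.symm
    · exact absurd (h1.trans h2) (lt_irrefl _)
  have w2 : biprod.lift (𝟙 X) (𝟙 X) ≫ biprod.desc e.hom (-e.hom) = 0 := by simp
  have ses2 : (ShortComplex.mk (biprod.lift (𝟙 X) (𝟙 X))
      (biprod.desc e.hom (-e.hom)) w2).ShortExact :=
    ShortComplex.Splitting.shortExact
      { r := biprod.fst
        s := -(e.inv ≫ biprod.inr)
        f_r := by simp
        s_g := by simp
        id := by ext <;> simp }
  rcases seesaw _ _ w2 ses2 hX hY with ⟨h1, h2⟩ | ⟨h1, h2⟩ | ⟨h1, h2⟩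
  · rw [hM] at h1; exact absurd h1 (lt_irrefl _)
  · exact h1.trans h2
  · rw [hM] at h2; exact absurd h2 (lt_irrefl _)


lemma stmt4_ses_ker {X Q : C} (p : X ⟶ Q) [Epi p] :
    (ShortComplex.mk (kernel.ι p) p (kernel.condition p)).ShortExact :=
  { exact := ShortComplex.exact_of_f_is_kernel _ (kernelIsKernel p)
    mono_f := inferInstance
    epi_g := ‹_› }

lemma stmt4_ses_coker {K E : C} (κ : K ⟶ E) [Mono κ] :
    (ShortComplex.mk κ (cokernel.π κ) (cokernel.condition κ)).ShortExact :=
  { exact := ShortComplex.exact_of_g_is_cokernel _ (cokernelIsCokernel κ)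
    mono_f := ‹_›
    epi_g := inferInstance }

lemma stmt4_semistable_T
    (seesaw : ∀ {A X B : C} (f : A ⟶ X) (g : X ⟶ B) (w : f ≫ g = 0),
      (ShortComplex.mk f g w).ShortExact → ¬ IsZero A → ¬ IsZero B →
      ((μ A < μ X ∧ μ X < μ B) ∨ (μ A = μ X ∧ μ X = μ B) ∨ (μ B < μ X ∧ μ X < μ A)))
    (s : S) {X : C}
    (hssX : ∀ {E : C} (i : E ⟶ X), Mono i → ¬ IsZero E → ¬ IsIso i → μ E ≤ μ X)
    (hX : ¬ IsZero X) (hμ : s ≤ μ X) :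
    ∀ {Q : C} (p : X ⟶ Q), Epi p → ¬ IsZero Q → s ≤ μ Q := by
  intro Q p hp hQ
  by_cases hK : IsZero (kernel p)
  · have : Mono p := Abelian.mono_of_kernel_ι_eq_zero _ (hK.eq_of_src _ _)
    have : IsIso p := isIso_of_mono_of_epi p
    rw [← stmt4_mu_iso μ seesaw hX (asIso p)]
    exact hμ
  · have hses := stmt4_ses_ker p
    have hni : ¬ IsIso (kernel.ι p) := by
      intro hi
      have hp0 : p = 0 := by
        rw [← cancel_epi (kernel.ι p), comp_zero]
        exact kernel.condition p
      exact hQ (stmt4_isZero_of_epi_zero p hp0)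
    have hle : μ (kernel p) ≤ μ X := hssX (kernel.ι p) inferInstance hK hni
    rcases seesaw _ _ (kernel.condition p) hses hK hQ with ⟨h1, h2⟩ | ⟨h1, h2⟩ | ⟨h1, h2⟩
    · exact hμ.trans h2.le
    · exact hμ.trans h2.le
    · exact absurd (lt_of_le_of_lt hle h2) (lt_irrefl _)

lemma stmt4_semistable_F
    (seesaw : ∀ {A X B : C} (f : A ⟶ X) (g : X ⟶ B) (w : f ≫ g = 0),
      (ShortComplex.mk f g w).ShortExact → ¬ IsZero A → ¬ IsZero B →
      ((μ A < μ X ∧ μ X < μ B) ∨ (μ A = μ X ∧ μ X = μ B) ∨ (μ B < μ X ∧ μ X < μ A)))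
    (s : S) {X : C}
    (hssX : ∀ {E : C} (i : E ⟶ X), Mono i → ¬ IsZero E → ¬ IsIso i → μ E ≤ μ X)
    (hX : ¬ IsZero X) (hμ : μ X < s) :
    ∀ {E : C} (i : E ⟶ X), Mono i → ¬ IsZero E → μ E < s := by
  intro E i hi hE
  by_cases hii : IsIso i
  · rw [stmt4_mu_iso μ seesaw hE (asIso i)]
    exact hμ
  · exact lt_of_le_of_lt (hssX i hi hE hii) hμ


lemma stmt4_T_ext
    (seesaw : ∀ {A X B : C} (f : A ⟶ X) (g : X ⟶ B) (w : f ≫ g = 0),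
      (ShortComplex.mk f g w).ShortExact → ¬ IsZero A → ¬ IsZero B →
      ((μ A < μ X ∧ μ X < μ B) ∨ (μ A = μ X ∧ μ X = μ B) ∨ (μ B < μ X ∧ μ X < μ A)))
    (s : S) {A X B : C} {f : A ⟶ X} {g : X ⟶ B} {w : f ≫ g = 0}
    (hSES : (ShortComplex.mk f g w).ShortExact)
    (hA : ∀ {Q : C} (p : A ⟶ Q), Epi p → ¬ IsZero Q → s ≤ μ Q)
    (hB : ∀ {Q : C} (p : B ⟶ Q), Epi p → ¬ IsZero Q → s ≤ μ Q) :
    ∀ {Q : C} (p : X ⟶ Q), Epi p → ¬ IsZero Q → s ≤ μ Q := by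
  intro Q p hp hQ
  have := hSES.epi_g
  have := hSES.mono_f
  by_cases hI : IsZero (image (f ≫ p))
  · have hq0 : f ≫ p = 0 := by
      rw [← image.fac (f ≫ p), hI.eq_of_src (image.ι (f ≫ p)) 0, comp_zero]
    obtain ⟨d, hd⟩ := hSES.exact.desc' p hq0
    have : Epi (g ≫ d) := by rw [hd]; exact hp
    have : Epi d := epi_of_epi g d
    exact hB d this hQ
  · by_cases hcok : IsZero (cokernel (image.ι (f ≫ p)))
    · have : Epi (image.ι (f ≫ p)) :=
        Abelian.epi_of_cokernel_π_eq_zero _ (hcok.eq_of_tgt _ _)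
      have : IsIso (image.ι (f ≫ p)) := isIso_of_mono_of_epi _
      have : Epi (f ≫ p) := by
        rw [← image.fac (f ≫ p)]
        exact epi_comp _ _
      exact hA (f ≫ p) this hQ
    · have hsges := stmt4_ses_coker (image.ι (f ≫ p))
      have h1 : s ≤ μ (image (f ≫ p)) := hA (factorThruImage (f ≫ p)) inferInstance hI
      have hw : f ≫ p ≫ cokernel.π (image.ι (f ≫ p)) = 0 := by
        calc f ≫ p ≫ cokernel.π (image.ι (f ≫ p))
            = (f ≫ p) ≫ cokernel.π (image.ι (f ≫ p)) := by rw [Category.assoc]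
          _ = (factorThruImage (f ≫ p) ≫ image.ι (f ≫ p)) ≫
                cokernel.π (image.ι (f ≫ p)) := by rw [image.fac]
          _ = 0 := by rw [Category.assoc, cokernel.condition, comp_zero]
      obtain ⟨d, hd⟩ := hSES.exact.desc' (p ≫ cokernel.π (image.ι (f ≫ p))) hw
      have : Epi (g ≫ d) := by rw [hd]; exact epi_comp _ _
      have : Epi d := epi_of_epi g d
      have h2 : s ≤ μ (cokernel (image.ι (f ≫ p))) := hB d this hcok
      rcases seesaw _ _ (cokernel.condition _) hsges hI hcok with
        ⟨h3, h4⟩ | ⟨h3, h4⟩ | ⟨h3, h4⟩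
      · exact h1.trans h3.le
      · exact h1.trans h3.le
      · exact h2.trans h3.le

lemma stmt4_F_ext
    (seesaw : ∀ {A X B : C} (f : A ⟶ X) (g : X ⟶ B) (w : f ≫ g = 0),
      (ShortComplex.mk f g w).ShortExact → ¬ IsZero A → ¬ IsZero B →
      ((μ A < μ X ∧ μ X < μ B) ∨ (μ A = μ X ∧ μ X = μ B) ∨ (μ B < μ X ∧ μ X < μ A)))
    (s : S) {A X B : C} {f : A ⟶ X} {g : X ⟶ B} {w : f ≫ g = 0}
    (hSES : (ShortComplex.mk f g w).ShortExact)
    (hA : ∀ {E : C} (i : E ⟶ A), Mono i → ¬ IsZero E → μ E < s)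
    (hB : ∀ {E : C} (i : E ⟶ B), Mono i → ¬ IsZero E → μ E < s) :
    ∀ {E : C} (i : E ⟶ X), Mono i → ¬ IsZero E → μ E < s := by
  intro E i hi hE
  have := hSES.mono_f
  have := hSES.epi_g
  by_cases hK : IsZero (kernel (i ≫ g))
  · have : Mono (i ≫ g) := Abelian.mono_of_kernel_ι_eq_zero _ (hK.eq_of_src _ _)
    exact hB (i ≫ g) this hE
  · by_cases hcoim : IsZero (cokernel (kernel.ι (i ≫ g)))
    · have : Epi (kernel.ι (i ≫ g)) :=
        Abelian.epi_of_cokernel_π_eq_zero _ (hcoim.eq_of_tgt _ _)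
      have : IsIso (kernel.ι (i ≫ g)) := isIso_of_mono_of_epi _
      have hig : i ≫ g = 0 := by
        rw [← cancel_epi (kernel.ι (i ≫ g)), comp_zero]
        exact kernel.condition _
      obtain ⟨j, hj⟩ := hSES.exact.lift' i hig
      have : Mono (j ≫ f) := by rw [hj]; exact hi
      have : Mono j := mono_of_mono j f
      exact hA j this hE
    · have hses2 := stmt4_ses_coker (kernel.ι (i ≫ g))
      have hw : (kernel.ι (i ≫ g) ≫ i) ≫ g = 0 := by
        rw [Category.assoc]
        exact kernel.condition _
      obtain ⟨u, hu⟩ := hSES.exact.lift' _ hw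
      have : Mono (u ≫ f) := by rw [hu]; exact mono_comp _ _
      have : Mono u := mono_of_mono u f
      have h1 : μ (kernel (i ≫ g)) < s := hA u this hK
      have h2 : μ (cokernel (kernel.ι (i ≫ g))) < s :=
        hB (Abelian.factorThruCoimage (i ≫ g)) inferInstance hcoim
      rcases seesaw _ _ (cokernel.condition _) hses2 hK hcoim with
        ⟨h3, h4⟩ | ⟨h3, h4⟩ | ⟨h3, h4⟩
      · exact h4.trans h2
      · rw [h4]; exact h2
      · exact h4.trans h1

end Slope

section Noether

variable {C : Type*} [Category C] [Abelian C]

open CategoryTheory.Abelian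

attribute [local instance] Pseudoelement.objectToSort Pseudoelement.homToFun

lemma stmt4_noether {A F F' G B : C} (a : A ⟶ F) (b : F ⟶ B) {wab : a ≫ b = 0}
    (hab : (ShortComplex.mk a b wab).ShortExact)
    (m : F ⟶ F') (q : F' ⟶ G) {wmq : m ≫ q = 0}
    (hmq : (ShortComplex.mk m q wmq).ShortExact) :
    ∃ (B' : C) (g' : F' ⟶ B') (w' : (a ≫ m) ≫ g' = 0)
      (β : B ⟶ B') (γ : B' ⟶ G) (wβγ : β ≫ γ = 0),
      (ShortComplex.mk (a ≫ m) g' w').ShortExact ∧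
      (ShortComplex.mk β γ wβγ).ShortExact := by
  have hma : Mono a := hab.mono_f
  have hbe : Epi b := hab.epi_g
  have hmm : Mono m := hmq.mono_f
  have hqe : Epi q := hmq.epi_g
  have hmam : Mono (a ≫ m) := mono_comp a m
  have hses1 : (ShortComplex.mk (a ≫ m) (cokernel.π (a ≫ m))
      (cokernel.condition (a ≫ m))).ShortExact := stmt4_ses_coker (a ≫ m)
  have hb0 : a ≫ m ≫ cokernel.π (a ≫ m) = 0 := by
    rw [← Category.assoc]
    exact cokernel.condition (a ≫ m)
  obtain ⟨β, hβ⟩ := hab.exact.desc' (m ≫ cokernel.π (a ≫ m)) hb0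
  have hγq : (a ≫ m) ≫ q = 0 := by rw [Category.assoc, wmq, comp_zero]
  have hγ : cokernel.π (a ≫ m) ≫ cokernel.desc (a ≫ m) q hγq = q := cokernel.π_desc _ _ _
  set γ := cokernel.desc (a ≫ m) q hγq with hγdef
  have wβγ : β ≫ γ = 0 := by
    rw [← cancel_epi b, comp_zero, ← Category.assoc, hβ, Category.assoc, hγ]
    exact wmq
  have hmono : Mono β := by
    apply Pseudoelement.mono_of_zero_of_map_zero
    intro x hx
    obtain ⟨f0, hf0⟩ := Pseudoelement.pseudo_surjective_of_epi b x
    have h1 : (cokernel.π (a ≫ m)) (m f0) = 0 := by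
      rw [← Pseudoelement.comp_apply, ← hβ, Pseudoelement.comp_apply, hf0]
      exact hx
    obtain ⟨a0, ha0⟩ := Pseudoelement.pseudo_exact_of_exact hses1.exact (m f0) h1
    have h2 : m (a a0) = m f0 := by
      rw [← Pseudoelement.comp_apply]
      exact ha0
    have hfa : a a0 = f0 := Pseudoelement.pseudo_injective_of_mono m h2
    rw [← hf0, ← hfa, ← Pseudoelement.comp_apply, wab]
    exact Pseudoelement.zero_apply _ _
  have hepi : Epi γ := by
    have : Epi q := hqe
    exact epi_of_epi_fac hγ
  have hexact : (ShortComplex.mk β γ wβγ).Exact := by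
    apply Pseudoelement.exact_of_pseudo_exact
    intro y hy
    obtain ⟨y', hy'⟩ := Pseudoelement.pseudo_surjective_of_epi (cokernel.π (a ≫ m)) y
    have hq0 : q y' = 0 := by
      rw [← hγ, Pseudoelement.comp_apply, hy']
      exact hy
    obtain ⟨f0, hf0⟩ := Pseudoelement.pseudo_exact_of_exact hmq.exact y' hq0
    refine ⟨b f0, ?_⟩
    rw [← Pseudoelement.comp_apply, hβ, Pseudoelement.comp_apply, hf0]
    exact hy'
  exact ⟨cokernel (a ≫ m), cokernel.π (a ≫ m), cokernel.condition (a ≫ m), β, γ, wβγ,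
    hses1, ShortComplex.ShortExact.mk' hexact hmono hepi⟩

end Noether

/-- A slope function `μ : C → S` into a totally ordered set, satisfying
the seesaw property, for which every nonzero object has a Harder–Narasimhan
filtration with semistable factors of strictly decreasing slopes, defines for each
`s ∈ S` a torsion pair `(T_s, F_s)`, where `T_s` consists of objects all of whose
nonzero quotients have slope `≥ s` and `F_s` of objects all of whose nonzero
subobjects have slope `< s`. -/
theorem stmt_4 {C : Type*} [Category C] [Abelian C]
    {S : Type*} [LinearOrder S]
    (μ : C → S)
    (seesaw : ∀ {A X B : C} (f : A ⟶ X) (g : X ⟶ B) (w : f ≫ g = 0),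
      (ShortComplex.mk f g w).ShortExact → ¬ IsZero A → ¬ IsZero B →
      ((μ A < μ X ∧ μ X < μ B) ∨ (μ A = μ X ∧ μ X = μ B) ∨ (μ B < μ X ∧ μ X < μ A)))
    (semistable : C → Prop)
    (hss : ∀ X : C, semistable X ↔
      ∀ {E : C} (i : E ⟶ X), Mono i → ¬ IsZero E → ¬ IsIso i → μ E ≤ μ X)
    (HN : ∀ X : C, ¬ IsZero X → ∃ (n : ℕ) (Fl : Fin (n + 1) → C)
      (fl : ∀ i : Fin n, Fl i.castSucc ⟶ Fl i.succ)
      (gr : Fin n → C) (pr : ∀ i : Fin n, Fl i.succ ⟶ gr i)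
      (w : ∀ i : Fin n, fl i ≫ pr i = 0),
      IsZero (Fl 0) ∧ Nonempty (Fl (Fin.last n) ≅ X) ∧
      (∀ i : Fin n, (ShortComplex.mk (fl i) (pr i) (w i)).ShortExact) ∧
      (∀ i : Fin n, semistable (gr i)) ∧
      (∀ i j : Fin n, i < j → μ (gr j) < μ (gr i)))
    (s : S) (Ts Fs : Set C)
    (hTs : ∀ X : C, X ∈ Ts ↔ ∀ {Q : C} (p : X ⟶ Q), Epi p → ¬ IsZero Q → s ≤ μ Q)
    (hFs : ∀ X : C, X ∈ Fs ↔ ∀ {E : C} (i : E ⟶ X), Mono i → ¬ IsZero E → μ E < s) :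
    (∀ A ∈ Ts, ∀ B ∈ Fs, ∀ f : A ⟶ B, f = 0) ∧
    (∀ X : C, ∃ (A B : C) (f : A ⟶ X) (g : X ⟶ B) (w : f ≫ g = 0),
      (ShortComplex.mk f g w).ShortExact ∧ A ∈ Ts ∧ B ∈ Fs) := by
  have T0 : ∀ {Z : C}, IsZero Z → Z ∈ Ts := by
    intro Z hZ
    rw [hTs]
    intro Q p hp hQ
    exact absurd (stmt4_isZero_of_epi_zero p (hZ.eq_of_src p 0)) hQ
  have F0 : ∀ {Z : C}, IsZero Z → Z ∈ Fs := by
    intro Z hZ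
    rw [hFs]
    intro E i hi hE
    haveI := hi
    exact absurd (stmt4_isZero_of_mono_zero i (hZ.eq_of_tgt i 0)) hE
  have T_iso : ∀ {X Y : C}, X ∈ Ts → (X ≅ Y) → Y ∈ Ts := by
    intro X Y hX e
    rw [hTs] at hX ⊢
    intro Q p hp hQ
    haveI := hp
    exact hX (e.hom ≫ p) (epi_comp _ _) hQ
  constructor
  · intro A hA B hB f
    by_contra hf
    have hI : ¬ IsZero (image f) := by
      intro h
      apply hf
      rw [← image.fac f, h.eq_of_src (image.ι f) 0, comp_zero]
    have h1 : s ≤ μ (image f) := (hTs A).1 hA (factorThruImage f) inferInstance hI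
    have h2 : μ (image f) < s := (hFs B).1 hB (image.ι f) inferInstance hI
    exact absurd h1 (not_le_of_gt h2)
  · intro X
    by_cases hX : IsZero X
    · exact ⟨X, X, 𝟙 X, 𝟙 X, _, stmt4_zero_ses X hX, T0 hX, F0 hX⟩
    obtain ⟨n, Fl, fl, gr, pr, w, h0, ⟨e⟩, hsesHN, hsemi, hdec⟩ := HN X hX
    have key : ∀ k : ℕ, ∀ hk : k ≤ n,
        ∃ (A B : C) (f : A ⟶ Fl ⟨k, Nat.lt_succ_of_le hk⟩)
          (g : Fl ⟨k, Nat.lt_succ_of_le hk⟩ ⟶ B) (w' : f ≫ g = 0),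
          (ShortComplex.mk f g w').ShortExact ∧ A ∈ Ts ∧ B ∈ Fs ∧
          (IsZero B ∨ ∃ j : Fin n, (j : ℕ) < k ∧ μ (gr j) < s) := by
      intro k
      induction k with
      | zero =>
        intro hk
        have hz : IsZero (Fl ⟨0, Nat.lt_succ_of_le hk⟩) := by
          have h00 : (0 : Fin (n + 1)) = ⟨0, Nat.lt_succ_of_le hk⟩ := by
            ext
            simp
          rwa [h00] at h0
        exact ⟨_, _, 𝟙 _, 𝟙 _, _, stmt4_zero_ses _ hz, T0 hz, F0 hz, Or.inl hz⟩
      | succ k ih =>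
        intro hk1
        have hk : k ≤ n := Nat.le_of_succ_le hk1
        obtain ⟨A, B, f, g, w', hses', hAT, hBF, hinv⟩ := ih hk
        have hkn : k < n := hk1
        by_cases hgr : IsZero (gr ⟨k, hkn⟩)
        · have hiso : IsIso (fl ⟨k, hkn⟩) := stmt4_isIso_f_of_isZero_X₃ (hsesHN ⟨k, hkn⟩) hgr
          refine ⟨A, B, f ≫ (asIso (fl ⟨k, hkn⟩)).hom, (asIso (fl ⟨k, hkn⟩)).inv ≫ g, _,
            stmt4_ses_iso_mid hses' (asIso (fl ⟨k, hkn⟩)), hAT, hBF, ?_⟩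
          rcases hinv with h | ⟨j, hj, hμ⟩
          · exact Or.inl h
          · exact Or.inr ⟨j, Nat.lt_succ_of_lt hj, hμ⟩
        · by_cases hge : s ≤ μ (gr ⟨k, hkn⟩)
          · have hBzero : IsZero B := by
              rcases hinv with h | ⟨j, hj, hμ⟩
              · exact h
              · exfalso
                have hji : j < (⟨k, hkn⟩ : Fin n) := by
                  rw [Fin.lt_def]
                  exact hj
                exact absurd hge (not_le.2 ((hdec j ⟨k, hkn⟩ hji).trans hμ))
            have hfiso : IsIso f := stmt4_isIso_f_of_isZero_X₃ hses' hBzero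
            have hT1 : Fl ⟨k, Nat.lt_succ_of_le hk⟩ ∈ Ts := T_iso hAT (asIso f)
            have hgrT : gr ⟨k, hkn⟩ ∈ Ts := by
              rw [hTs]
              exact stmt4_semistable_T μ seesaw s ((hss _).1 (hsemi ⟨k, hkn⟩)) hgr hge
            have hT2 : Fl (Fin.succ ⟨k, hkn⟩) ∈ Ts := by
              rw [hTs]
              exact stmt4_T_ext μ seesaw s (hsesHN ⟨k, hkn⟩)
                ((hTs _).1 hT1) ((hTs _).1 hgrT)
            exact ⟨Fl (Fin.succ ⟨k, hkn⟩), 0, 𝟙 _, 0, by simp, stmt4_ses_id_zero _,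
              hT2, F0 (isZero_zero C), Or.inl (isZero_zero C)⟩
          · push_neg at hge
            have hgrF : ∀ {E : C} (j : E ⟶ gr ⟨k, hkn⟩), Mono j → ¬ IsZero E → μ E < s :=
              stmt4_semistable_F μ seesaw s ((hss _).1 (hsemi ⟨k, hkn⟩)) hgr hge
            obtain ⟨B', g'', w'', β, γ, wβγ, hses1, hses2⟩ :=
              stmt4_noether f g hses' (fl ⟨k, hkn⟩) (pr ⟨k, hkn⟩) (hsesHN ⟨k, hkn⟩)
            have hB'F : B' ∈ Fs := by
              rw [hFs]
              exact stmt4_F_ext μ seesaw s hses2 ((hFs _).1 hBF) hgrF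
            exact ⟨A, B', f ≫ fl ⟨k, hkn⟩, g'', w'', hses1, hAT, hB'F,
              Or.inr ⟨⟨k, hkn⟩, Nat.lt_succ_self k, hge⟩⟩
    obtain ⟨A, B, f, g, w', hs', hAT, hBF, _⟩ := key n le_rfl
    exact ⟨A, B, f ≫ e.hom, e.inv ≫ g, _, stmt4_ses_iso_mid hs' e, hAT, hBF⟩
end

section
/- For i = 0,1,2,3, let V^i = ⊕_{w∈ℤ} V^i_w be finite-dimensional ℤ-graded vector spaces over a field, and suppose that for all i and all w there are isomorphisms V^i_w ≅ (V^{3-i}_{-w})^*. Then in the field ℚ(t), the product ∏_{i=0}^{3} ∏_{w≠0} (w·t)^{(-1)^i dim V^i_w} equals (-1)^{χ^+}, where χ^+ = Σ_{i=0}^{3} (-1)^i Σ_{w>0} dim V^i_w. -/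
open scoped BigOperators

private lemma zpow_sum_aux {G₀ : Type*} [CommGroupWithZero G₀] {x : G₀} (hx : x ≠ 0)
    {ι : Type*} (s : Finset ι) (f : ι → ℤ) :
    x ^ (∑ i ∈ s, f i) = ∏ i ∈ s, x ^ f i := by
  induction s using Finset.cons_induction with
  | empty => simp
  | cons a s ha ih => simp [Finset.sum_cons, Finset.prod_cons, zpow_add₀ hx, ih]

private lemma neg_pair_aux {F : Type*} [Field F] {x : F} (hx : x ≠ 0) (e : ℤ) :
    x ^ e * (-x) ^ (-e) = (-1 : F) ^ e := by
  have hx' : x ^ e ≠ 0 := zpow_ne_zero _ hx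
  have h1 : ((-1 : F)) ^ (-e) = (-1 : F) ^ e := by
    rw [← inv_zpow', inv_neg, inv_one]
  rw [← neg_one_mul x, mul_zpow, h1, zpow_neg x, mul_comm ((-1 : F) ^ e) _, ← mul_assoc,
    mul_inv_cancel₀ hx', one_mul]

/-- For finite-dimensional ℤ-graded vector spaces `V^0, …, V^3`
(all weight spaces of nonzero weight supported in a finite set `S` of nonzero
integers) such that `V^i_w ≅ (V^{3-i}_{-w})^*` for all `i, w`, the product
`∏_{i=0}^3 ∏_{w ≠ 0} (w·t)^{(-1)^i dim V^i_w}` in `ℚ(t)` equals `(-1)^{χ⁺}`,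
where `χ⁺ = Σ_i (-1)^i Σ_{w>0} dim V^i_w`. -/
theorem stmt_7 {K : Type*} [Field K]
    (V : Fin 4 → ℤ → Type*)
    [∀ i w, AddCommGroup (V i w)] [∀ i w, Module K (V i w)]
    [∀ i w, FiniteDimensional K (V i w)]
    (S : Finset ℤ) (h0S : (0 : ℤ) ∉ S)
    (hsupp : ∀ (i : Fin 4) (w : ℤ), w ≠ 0 → Module.finrank K (V i w) ≠ 0 → w ∈ S)
    (hdual : ∀ (i : Fin 4) (w : ℤ),
      Nonempty (V i w ≃ₗ[K] Module.Dual K (V (3 - i) (-w)))) :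
    (∏ i : Fin 4, ∏ w ∈ S,
        ((w : RatFunc ℚ) * RatFunc.X) ^ ((-1 : ℤ) ^ (i : ℕ) * (Module.finrank K (V i w) : ℤ)))
      = (-1 : RatFunc ℚ) ^ (∑ i : Fin 4, (-1 : ℤ) ^ (i : ℕ) *
          ∑ w ∈ S.filter (fun w => 0 < w), (Module.finrank K (V i w) : ℤ)) := by
  classical
  haveI : CharZero (RatFunc ℚ) :=
    charZero_of_injective_algebraMap (algebraMap ℚ (RatFunc ℚ)).injective
  set d : Fin 4 → ℤ → ℤ := fun i w => (Module.finrank K (V i w) : ℤ) with hdDef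
  have hdd : ∀ (i : Fin 4) (w : ℤ), d i w = d (3 - i) (-w) := by
    intro i w
    obtain ⟨f⟩ := hdual i w
    simp only [hdDef, Nat.cast_inj]
    rw [f.finrank_eq, Subspace.dual_finrank_eq]
  have hvanish : ∀ (i : Fin 4) (w : ℤ), w ≠ 0 → w ∉ S → d i w = 0 := by
    intro i w hw hwS
    simp only [hdDef, Nat.cast_eq_zero]
    by_contra h
    exact hwS (hsupp i w hw h)
  set T : Finset ℤ := S ∪ S.image (fun w => -w) with hTdef
  have hST : S ⊆ T := Finset.subset_union_left
  have hT0 : ∀ w ∈ T, w ≠ 0 := by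
    intro w hw
    rcases Finset.mem_union.mp hw with h | h
    · rintro rfl; exact h0S h
    · obtain ⟨s, hs, rfl⟩ := Finset.mem_image.mp h
      intro h0
      exact h0S (by rwa [show s = 0 by omega] at hs)
  have hTsymm : ∀ w ∈ T, -w ∈ T := by
    intro w hw
    rcases Finset.mem_union.mp hw with h | h
    · exact Finset.mem_union_right _ (Finset.mem_image.mpr ⟨w, h, rfl⟩)
    · obtain ⟨s, hs, rfl⟩ := Finset.mem_image.mp h
      rw [neg_neg]
      exact Finset.mem_union_left _ hs
  have hε : ∀ i : Fin 4, ((-1 : ℤ)) ^ (((3 - i : Fin 4)) : ℕ) = -(-1 : ℤ) ^ (i : ℕ) := by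
    decide
  have hbase : ∀ w : ℤ, w ≠ 0 → ((w : RatFunc ℚ) * RatFunc.X) ≠ 0 := by
    intro w hw
    exact mul_ne_zero (Int.cast_ne_zero.mpr hw) RatFunc.X_ne_zero
  -- step 1: enlarge S to T on the left
  have hL : (∏ i : Fin 4, ∏ w ∈ S,
        ((w : RatFunc ℚ) * RatFunc.X) ^ ((-1 : ℤ) ^ (i : ℕ) * d i w))
      = ∏ i : Fin 4, ∏ w ∈ T,
        ((w : RatFunc ℚ) * RatFunc.X) ^ ((-1 : ℤ) ^ (i : ℕ) * d i w) := by
    refine Finset.prod_congr rfl fun i _ => ?_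
    refine Finset.prod_subset hST fun w hwT hwS => ?_
    rw [hvanish i w (hT0 w hwT) hwS, mul_zero, zpow_zero]
  -- step 2: enlarge S to T on the right
  have hR : (∑ i : Fin 4, (-1 : ℤ) ^ (i : ℕ) * ∑ w ∈ S.filter (fun w => 0 < w), d i w)
      = ∑ i : Fin 4, (-1 : ℤ) ^ (i : ℕ) * ∑ w ∈ T.filter (fun w => 0 < w), d i w := by
    refine Finset.sum_congr rfl fun i _ => ?_
    congr 1
    refine Finset.sum_subset (Finset.filter_subset_filter _ hST) fun w hwT hwS => ?_
    rw [Finset.mem_filter] at hwT hwS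
    exact hvanish i w (hT0 w hwT.1) fun h => hwS ⟨h, hwT.2⟩
  set P : Finset ℤ := T.filter (fun w => 0 < w) with hPdef
  have hmemP : ∀ w : ℤ, w ∈ P ↔ (w ∈ T ∧ 0 < w) := fun w => Finset.mem_filter
  have hTP : T = P ∪ P.image (fun w => -w) := by
    ext w
    simp only [Finset.mem_union, Finset.mem_image, hmemP]
    constructor
    · intro hw
      rcases lt_trichotomy 0 w with h | h | h
      · exact Or.inl ⟨hw, h⟩
      · exact absurd h.symm (hT0 w hw)
      · exact Or.inr ⟨-w, ⟨hTsymm w hw, by omega⟩, by omega⟩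
    · rintro (⟨hw, _⟩ | ⟨s, ⟨hs, _⟩, rfl⟩)
      · exact hw
      · exact hTsymm s hs
  have hdisj : Disjoint P (P.image (fun w => -w)) := by
    rw [Finset.disjoint_left]
    rintro a ha hb
    obtain ⟨s, hs, rfl⟩ := Finset.mem_image.mp hb
    rw [hmemP] at ha hs
    omega
  have hinj : Set.InjOn (fun w : ℤ => -w) P := fun a _ b _ h => by
    simpa using h
  rw [hL, hR]
  have key : ∀ g : ℤ → RatFunc ℚ,
      ∏ w ∈ T, g w = (∏ w ∈ P, g w) * ∏ w ∈ P, g (-w) := by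
    intro g
    rw [hTP, Finset.prod_union hdisj, Finset.prod_image hinj]
  calc (∏ i : Fin 4, ∏ w ∈ T, ((w : RatFunc ℚ) * RatFunc.X) ^ ((-1 : ℤ) ^ (i : ℕ) * d i w))
      = ∏ i : Fin 4, ((∏ w ∈ P, ((w : RatFunc ℚ) * RatFunc.X) ^ ((-1 : ℤ) ^ (i : ℕ) * d i w)) *
          ∏ w ∈ P, (((-w : ℤ) : RatFunc ℚ) * RatFunc.X) ^ ((-1 : ℤ) ^ (i : ℕ) * d i (-w))) :=
        Finset.prod_congr rfl fun i _ => key _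
    _ = (∏ i : Fin 4, ∏ w ∈ P, ((w : RatFunc ℚ) * RatFunc.X) ^ ((-1 : ℤ) ^ (i : ℕ) * d i w)) *
        ∏ i : Fin 4, ∏ w ∈ P, (((-w : ℤ) : RatFunc ℚ) * RatFunc.X) ^ ((-1 : ℤ) ^ (i : ℕ) * d i (-w)) :=
        Finset.prod_mul_distrib
    _ = (∏ i : Fin 4, ∏ w ∈ P, ((w : RatFunc ℚ) * RatFunc.X) ^ ((-1 : ℤ) ^ (i : ℕ) * d i w)) *
        ∏ i : Fin 4, ∏ w ∈ P, (((-w : ℤ) : RatFunc ℚ) * RatFunc.X) ^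
          ((-1 : ℤ) ^ (((3 - i : Fin 4)) : ℕ) * d (3 - i) (-w)) := by
        congr 1
        refine Fintype.prod_equiv (Equiv.subLeft (3 : Fin 4)) _ _ (fun i => ?_)
        rw [Equiv.subLeft_apply, sub_sub_cancel]
    _ = ∏ i : Fin 4, ∏ w ∈ P,
          (((w : RatFunc ℚ) * RatFunc.X) ^ ((-1 : ℤ) ^ (i : ℕ) * d i w) *
           (((-w : ℤ) : RatFunc ℚ) * RatFunc.X) ^
             ((-1 : ℤ) ^ (((3 - i : Fin 4)) : ℕ) * d (3 - i) (-w))) := by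
        rw [← Finset.prod_mul_distrib]
        exact Finset.prod_congr rfl fun i _ => (Finset.prod_mul_distrib).symm
    _ = ∏ i : Fin 4, ∏ w ∈ P, (-1 : RatFunc ℚ) ^ ((-1 : ℤ) ^ (i : ℕ) * d i w) := by
        refine Finset.prod_congr rfl fun i _ => Finset.prod_congr rfl fun w hw => ?_
        have hw0 : w ≠ 0 := hT0 w (Finset.mem_of_mem_filter w hw)
        have hb := hbase w hw0
        rw [← hdd i w, hε i, neg_mul, Int.cast_neg, neg_mul]
        exact neg_pair_aux hb _
    _ = (-1 : RatFunc ℚ) ^ (∑ i : Fin 4, (-1 : ℤ) ^ (i : ℕ) * ∑ w ∈ P, d i w) := by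
        rw [zpow_sum_aux (by norm_num : (-1 : RatFunc ℚ) ≠ 0)]
        refine Finset.prod_congr rfl fun i _ => ?_
        rw [Finset.mul_sum, zpow_sum_aux (by norm_num : (-1 : RatFunc ℚ) ≠ 0)]
end

section
/- Let D be a triangulated category, and suppose given a distinguished triangle I_C → I → Q[-1] → I_C[1] in D. Assume Hom^{≤0}(Q, O) = 0, Hom^{≤-1}(I_C, O) = 0, Hom^{≤0}(Q, F) = 0, Hom^{≤-1}(I_C, F) = 0 for objects O, F, and that there is a distinguished triangle I → O → F → I[1]. Then Hom^{≤-1}(I, I) = 0, where Hom^i(A,B) := Hom(A, B[i]). -/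
open CategoryTheory CategoryTheory.Limits CategoryTheory.Pretriangulated

/-- Auxiliary: if all maps `X ⟶ Y⟦i+1⟧` vanish, then all maps
`X⟦-1⟧ ⟶ Y⟦i⟧` vanish. -/
lemma aux_shift_dom {D : Type*} [Category D] [HasShift D ℤ]
    [Preadditive D] [∀ n : ℤ, (shiftFunctor D n).Additive]
    {X Y : D} (i : ℤ) (h : ∀ f : X ⟶ Y⟦(i + 1 : ℤ)⟧, f = 0)
    (g : X⟦(-1 : ℤ)⟧ ⟶ Y⟦i⟧) : g = 0 := by
  have h2 : ∀ g' : X⟦(-1 : ℤ)⟧ ⟶ (Y⟦(i + 1 : ℤ)⟧)⟦(-1 : ℤ)⟧, g' = 0 := by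
    intro g'
    obtain ⟨g'', rfl⟩ := (shiftFunctor D (-1 : ℤ)).map_surjective g'
    rw [h g'', Functor.map_zero]
  have h3 := h2 (g ≫ (shiftFunctorAdd' D (i + 1) (-1) i (by ring)).hom.app Y)
  have h4 : g = (g ≫ (shiftFunctorAdd' D (i + 1) (-1) i (by ring)).hom.app Y) ≫
      (shiftFunctorAdd' D (i + 1) (-1) i (by ring)).inv.app Y := by simp
  rw [h4, h3, Limits.zero_comp]

/-- Auxiliary: if all maps `X ⟶ Y⟦i-1⟧` vanish, then all maps
`X ⟶ (Y⟦i⟧)⟦-1⟧` vanish. -/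
lemma aux_shift_cod {D : Type*} [Category D] [HasShift D ℤ]
    [Preadditive D] [∀ n : ℤ, (shiftFunctor D n).Additive]
    {X Y : D} (i : ℤ) (h : ∀ f : X ⟶ Y⟦(i + (-1) : ℤ)⟧, f = 0)
    (g : X ⟶ (Y⟦i⟧)⟦(-1 : ℤ)⟧) : g = 0 := by
  have h3 := h (g ≫ (shiftFunctorAdd D i (-1)).inv.app Y)
  have h4 : g = (g ≫ (shiftFunctorAdd D i (-1)).inv.app Y) ≫
      (shiftFunctorAdd D i (-1)).hom.app Y := by simp
  rw [h4, h3, Limits.zero_comp]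

/-- In a triangulated category, given distinguished triangles
`I_C → I → Q[-1] → I_C[1]` and `I → O → F → I[1]`, with the vanishings
`Hom^{≤0}(Q, O) = 0`, `Hom^{≤-1}(I_C, O) = 0`, `Hom^{≤0}(Q, F) = 0`,
`Hom^{≤-1}(I_C, F) = 0`, one has `Hom^{≤-1}(I, I) = 0`. -/
theorem stmt_13 {D : Type*} [Category D] [Preadditive D] [HasZeroObject D]
    [HasShift D ℤ] [∀ n : ℤ, (shiftFunctor D n).Additive] [Pretriangulated D]
    {IC I Q O F : D}
    (a : IC ⟶ I) (b : I ⟶ Q⟦(-1 : ℤ)⟧) (c : Q⟦(-1 : ℤ)⟧ ⟶ IC⟦(1 : ℤ)⟧)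
    (ht1 : Triangle.mk a b c ∈ distTriang D)
    (u : I ⟶ O) (v : O ⟶ F) (wmap : F ⟶ I⟦(1 : ℤ)⟧)
    (ht2 : Triangle.mk u v wmap ∈ distTriang D)
    (hQO : ∀ i : ℤ, i ≤ 0 → ∀ f : Q ⟶ O⟦i⟧, f = 0)
    (hICO : ∀ i : ℤ, i ≤ -1 → ∀ f : IC ⟶ O⟦i⟧, f = 0)
    (hQF : ∀ i : ℤ, i ≤ 0 → ∀ f : Q ⟶ F⟦i⟧, f = 0)
    (hICF : ∀ i : ℤ, i ≤ -1 → ∀ f : IC ⟶ F⟦i⟧, f = 0) :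
    ∀ i : ℤ, i ≤ -1 → ∀ f : I ⟶ I⟦i⟧, f = 0 := by
  -- Step 1: Hom^{≤ -1}(I, O) = 0
  have hIO : ∀ i : ℤ, i ≤ -1 → ∀ f : I ⟶ O⟦i⟧, f = 0 := by
    intro i hi f
    obtain ⟨g, rfl⟩ := Triangle.yoneda_exact₂ _ ht1 f (hICO i hi _)
    rw [aux_shift_dom i (fun h => hQO (i + 1) (by omega) h) g]
    exact Limits.comp_zero
  -- Step 2: Hom^{≤ -1}(I, F) = 0
  have hIF : ∀ i : ℤ, i ≤ -1 → ∀ f : I ⟶ F⟦i⟧, f = 0 := by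
    intro i hi f
    obtain ⟨g, rfl⟩ := Triangle.yoneda_exact₂ _ ht1 f (hICF i hi _)
    rw [aux_shift_dom i (fun h => hQF (i + 1) (by omega) h) g]
    exact Limits.comp_zero
  -- Step 3: conclude
  intro i hi f
  have hT' := Triangle.shift_distinguished _ ht2 i
  have hT'' := inv_rot_of_distTriang _ hT'
  have hf : f ≫ ((Triangle.mk u v wmap)⟦(i : ℤ)⟧).invRotate.mor₂ = 0 :=
    hIO i hi _
  obtain ⟨g, hg⟩ := Triangle.coyoneda_exact₂ _ hT'' f hf
  have hg0 : g = 0 := aux_shift_cod i (fun h => hIF (i + (-1)) (by omega) h) g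
  rw [hg, hg0, Limits.zero_comp]
  rfl
end

section
/- Let D be a ℂ-linear triangulated category. Suppose I and J are objects fitting in distinguished triangles I → O → F → I[1] and J → O → G → J[1], and J also fits in a triangle I_D → J → K[-1] → I_D[1]. Assume: Hom(G, O) = 0, Hom^1(G, O) = 0, Hom(O, O) ≅ ℂ, Hom(K, F) = 0, and Hom^{-1}(I_D, F) = 0. Then the natural map Hom(J, I) → Hom(O, O) ≅ ℂ induced by the triangles is injective. In particular, if I = J then every endomorphism of I is a scalar multiple of the identity. -/
open CategoryTheory CategoryTheory.Limits CategoryTheory.Pretriangulated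

/-- In a ℂ-linear triangulated category, given distinguished
triangles `I → O → F → I[1]`, `J → O → G → J[1]` and `I_D → J → K[-1] → I_D[1]`,
with `Hom(G, O) = 0`, `Hom^1(G, O) = 0`, `Hom(O, O) ≅ ℂ` (spanned by the
identity), `Hom(K, F) = 0` and `Hom^{-1}(I_D, F) = 0`, the natural map
`Hom(J, I) → Hom(J, O) ≅ Hom(O, O) ≅ ℂ`, `φ ↦ φ ≫ f_I`, is well defined and
injective.  (Taking `I = J` yields that all endomorphisms of `I` are scalars.) -/
theorem stmt_14 {D : Type*} [Category D] [Preadditive D] [HasZeroObject D]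
    [HasShift D ℤ] [∀ n : ℤ, (shiftFunctor D n).Additive] [Pretriangulated D]
    [Linear ℂ D]
    {I J O F G ID K : D}
    (fI : I ⟶ O) (vF : O ⟶ F) (wF : F ⟶ I⟦(1 : ℤ)⟧)
    (htI : Triangle.mk fI vF wF ∈ distTriang D)
    (fJ : J ⟶ O) (vG : O ⟶ G) (wG : G ⟶ J⟦(1 : ℤ)⟧)
    (htJ : Triangle.mk fJ vG wG ∈ distTriang D)
    (aD : ID ⟶ J) (bD : J ⟶ K⟦(-1 : ℤ)⟧) (cD : K⟦(-1 : ℤ)⟧ ⟶ ID⟦(1 : ℤ)⟧)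
    (htK : Triangle.mk aD bD cD ∈ distTriang D)
    (hGO : ∀ f : G ⟶ O, f = 0)
    (hGO1 : ∀ f : G ⟶ O⟦(1 : ℤ)⟧, f = 0)
    (hOO : ∀ f : O ⟶ O, ∃ c : ℂ, f = c • 𝟙 O)
    (hKF : ∀ f : K ⟶ F, f = 0)
    (hIDF : ∀ f : ID ⟶ F⟦(-1 : ℤ)⟧, f = 0) :
    (∀ φ : J ⟶ I, ∃ c : ℂ, φ ≫ fI = c • fJ) ∧
    Function.Injective (fun φ : J ⟶ I => φ ≫ fI) := by
  -- Hom(G⟦-1⟧, O) = 0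
  have hGO' : ∀ h : G⟦(-1 : ℤ)⟧ ⟶ O, h = 0 := by
    intro h
    apply (shiftFunctor D (1 : ℤ)).map_injective
    have e := (shiftFunctorCompIsoId D (-1 : ℤ) (1 : ℤ) (by ring)).hom.app G
    have e' := (shiftFunctorCompIsoId D (-1 : ℤ) (1 : ℤ) (by ring)).inv.app G
    have h0 : (shiftFunctorCompIsoId D (-1 : ℤ) (1 : ℤ) (by ring)).inv.app G ≫
        (shiftFunctor D (1 : ℤ)).map h = 0 := hGO1 _
    calc (shiftFunctor D (1 : ℤ)).map h
        = (shiftFunctorCompIsoId D (-1 : ℤ) (1 : ℤ) (by ring)).hom.app G ≫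
          ((shiftFunctorCompIsoId D (-1 : ℤ) (1 : ℤ) (by ring)).inv.app G ≫
            (shiftFunctor D (1 : ℤ)).map h) := by
          rw [← Category.assoc, Iso.hom_inv_id_app, Category.id_comp]
      _ = 0 := by rw [h0, comp_zero]
      _ = (shiftFunctor D (1 : ℤ)).map 0 := by rw [Functor.map_zero]
  constructor
  · intro φ
    obtain ⟨g, hg⟩ := Triangle.yoneda_exact₂ _ (inv_rot_of_distTriang _ htJ)
      (φ ≫ fI) (hGO' _)
    obtain ⟨c, hc⟩ := hOO g
    exact ⟨c, hg.trans (by rw [hc]; exact (Linear.comp_smul (R := ℂ) _ _ _ fJ c (𝟙 O)).trans (by rw [Category.comp_id]))⟩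
  · intro φ₁ φ₂ hEq
    simp only at hEq
    have hsub : (φ₁ - φ₂) ≫ fI = 0 := by rw [Preadditive.sub_comp, hEq, sub_self]
    obtain ⟨g, hg⟩ := Triangle.coyoneda_exact₂ _ (inv_rot_of_distTriang _ htI)
      (φ₁ - φ₂) hsub
    have hag : aD ≫ g = 0 := hIDF _
    obtain ⟨h, hh⟩ := Triangle.yoneda_exact₂ _ htK g hag
    obtain ⟨h₀, rfl⟩ := (shiftFunctor D (-1 : ℤ)).map_surjective h
    replace hh : g = 0 := by
      rw [hh, hKF h₀]; exact (congrArg (bD ≫ ·) ((shiftFunctor D (-1 : ℤ)).map_zero K F)).trans comp_zero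
    rw [hh, zero_comp] at hg
    exact sub_eq_zero.mp hg
end
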